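/- arXiv:1904.04521 — 2 statements merged into one kernel-verified Lean document; each statement's English description precedes it below -/
import Mathlib

section
/- Let X be a type, S ⊆ X, and let B : ℝ × ℝ → Set X satisfy: (interpolation) for all x₀, x₁ > 0, s₀, s₁ ∈ ℝ and θ ∈ (0,1), B(x₀,s₀) ∩ B(x₁,s₁) ⊆ B((1-θ)x₀+θx₁, (1-θ)s₀+θs₁). Fix d ≥ 1 (a natural number), reals 0 < x_z < x_p (representing 1/p_z < 1/p), s̄ > 0 and z ∈ ℝ with z > μ := s̄ - d(x_p - x_z). Assume: (1) S ⊆ B(x_z, s) for all s < z; (2) for every s > s̄, S is NOT contained in B(x_p, s). Then for every α > s̄·(s̄-μ)/(z-μ), S is not contained in B(α/d + x_p, α). -/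
theorem stmt4 {X : Type*} (S : Set X) (B : ℝ → ℝ → Set X)
    (hinterp : ∀ x₀ s₀ x₁ s₁ θ : ℝ, 0 < x₀ → 0 < x₁ → 0 < θ → θ < 1 →
      B x₀ s₀ ∩ B x₁ s₁ ⊆ B ((1 - θ) * x₀ + θ * x₁) ((1 - θ) * s₀ + θ * s₁))
    (d : ℕ) (hd : 1 ≤ d) (x_z x_p sbar z : ℝ)
    (hxz : 0 < x_z) (hxzp : x_z < x_p) (hs : 0 < sbar)
    (hz : z > sbar - d * (x_p - x_z))
    (h1 : ∀ s < z, S ⊆ B x_z s)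
    (h2 : ∀ s > sbar, ¬ S ⊆ B x_p s) :
    ∀ α, α > sbar * (sbar - (sbar - d * (x_p - x_z))) / (z - (sbar - d * (x_p - x_z))) →
      ¬ S ⊆ B (α / d + x_p) α := by
  intro α hα hsub
  have hd0 : (1:ℝ) ≤ (d:ℝ) := by exact_mod_cast hd
  have hdpos : (0:ℝ) < (d:ℝ) := by linarith
  have hδ : 0 < (d:ℝ) * (x_p - x_z) := by nlinarith
  have hzμ : 0 < z - (sbar - (d:ℝ) * (x_p - x_z)) := by linarith
  have hα0 : 0 < α := lt_trans (div_pos (by nlinarith) hzμ) hα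
  have hαd : 0 < α / (d:ℝ) := div_pos hα0 hdpos
  set D : ℝ := α / d + x_p - x_z with hD
  have hDpos : 0 < D := by rw [hD]; linarith
  set θ : ℝ := (x_p - x_z) / D with hθdef
  have hθpos : 0 < θ := div_pos (by linarith) hDpos
  have hθlt : θ < 1 := (div_lt_one hDpos).mpr (by rw [hD]; linarith)
  have hθD : θ * D = x_p - x_z := div_mul_cancel₀ _ (ne_of_gt hDpos)
  have hDd : D * (d:ℝ) = α + (d:ℝ) * (x_p - x_z) := by
    rw [hD]; field_simp; ring
  have hαz : sbar * ((d:ℝ) * (x_p - x_z)) < α * (z - (sbar - (d:ℝ) * (x_p - x_z))) := by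
    have := (div_lt_iff₀ hzμ).mp hα
    nlinarith
  set t₀ : ℝ := (1 - θ) * z + θ * α with ht₀
  have ht₀s : sbar < t₀ := by
    have key : ((1 - θ) * z + θ * α - sbar) * (D * (d:ℝ)) =
        α * (z - (sbar - (d:ℝ) * (x_p - x_z))) - sbar * ((d:ℝ) * (x_p - x_z)) := by
      linear_combination (α - z) * (d:ℝ) * hθD + (z - sbar) * hDd
    rw [ht₀]
    nlinarith [key, hαz, mul_pos hDpos hdpos]
  set s : ℝ := z - (t₀ - sbar) / (2 * (1 - θ)) with hsdef
  have h1θ : 0 < 1 - θ := by linarith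
  have hslt : s < z := by
    rw [hsdef]
    have : 0 < (t₀ - sbar) / (2 * (1 - θ)) := div_pos (by linarith) (by linarith)
    linarith
  have hv : (1 - θ) * s + θ * α = (t₀ + sbar) / 2 := by
    rw [hsdef, ht₀]; field_simp; ring
  have hvs : sbar < (1 - θ) * s + θ * α := by rw [hv]; linarith
  have hx : (1 - θ) * x_z + θ * (α / d + x_p) = x_p := by
    have : (1 - θ) * x_z + θ * (α / d + x_p) = x_z + θ * D := by rw [hD]; ring
    rw [this, hθD]; ring
  have hmem : S ⊆ B x_p ((1 - θ) * s + θ * α) := by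
    intro x hx'
    have := hinterp x_z s (α / d + x_p) α θ hxz (by linarith) hθpos hθlt
      ⟨h1 s hslt hx', hsub hx'⟩
    rwa [hx] at this
  exact h2 _ hvs hmem
end

section
/- Let X be a type, S ⊆ X, and let B : ℝ × ℝ → Set X satisfy the interpolation property: for all x₀, x₁ > 0, s₀, s₁, θ ∈ (0,1), B(x₀,s₀) ∩ B(x₁,s₁) ⊆ B((1-θ)x₀+θx₁, (1-θ)s₀+θs₁). Fix d ≥ 1, reals 0 < x_z < x_p, z ∈ ℝ and α > 0. Assume S ⊆ B(x_z, z) and S ⊆ B(α/d + x_p, α). Then S ⊆ B(x_p, s̃) where s̃ = α·(z + d(x_p - x_z))/(α + d(x_p - x_z)). -/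
/-! Moving from `(x_z, z)` towards the point `(α / d + x_p, α)` of the embedding line with weight
`θ = D / (α + D)`, `D = d (x_p - x_z)`, lands exactly at integrability `x_p`; the smoothness of
that convex combination is `s̃`. -/

theorem subset_interp_of_subset_of_subset {X : Type*} {S : Set X} {B : ℝ → ℝ → Set X}
    (hinterp : ∀ x₀ s₀ x₁ s₁ θ : ℝ, 0 < x₀ → 0 < x₁ → 0 < θ → θ < 1 →
      B x₀ s₀ ∩ B x₁ s₁ ⊆ B ((1 - θ) * x₀ + θ * x₁) ((1 - θ) * s₀ + θ * s₁))
    {x₀ s₀ x₁ s₁ θ : ℝ} (hx₀ : 0 < x₀) (hx₁ : 0 < x₁) (hθ₀ : 0 < θ) (hθ₁ : θ < 1)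
    (h₀ : S ⊆ B x₀ s₀) (h₁ : S ⊆ B x₁ s₁) :
    S ⊆ B ((1 - θ) * x₀ + θ * x₁) ((1 - θ) * s₀ + θ * s₁) :=
  (Set.subset_inter h₀ h₁).trans (hinterp x₀ s₀ x₁ s₁ θ hx₀ hx₁ hθ₀ hθ₁)

section EmbeddingLine

variable {d x_z x_p z α : ℝ}

theorem convexComb_integrability_eq (hd : d ≠ 0) (hden : α + d * (x_p - x_z) ≠ 0) :
    (1 - d * (x_p - x_z) / (α + d * (x_p - x_z))) * x_z
      + d * (x_p - x_z) / (α + d * (x_p - x_z)) * (α / d + x_p) = x_p := by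
  field_simp
  ring

theorem convexComb_smoothness_eq (hden : α + d * (x_p - x_z) ≠ 0) :
    (1 - d * (x_p - x_z) / (α + d * (x_p - x_z))) * z
      + d * (x_p - x_z) / (α + d * (x_p - x_z)) * α
      = α * (z + d * (x_p - x_z)) / (α + d * (x_p - x_z)) := by
  field_simp
  ring

theorem subset_interp_embeddingLine {X : Type*} {S : Set X} {B : ℝ → ℝ → Set X}
    (hinterp : ∀ x₀ s₀ x₁ s₁ θ : ℝ, 0 < x₀ → 0 < x₁ → 0 < θ → θ < 1 →
      B x₀ s₀ ∩ B x₁ s₁ ⊆ B ((1 - θ) * x₀ + θ * x₁) ((1 - θ) * s₀ + θ * s₁))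
    (hd : 0 < d) (hxz : 0 < x_z) (hxzp : x_z < x_p) (hα : 0 < α)
    (h1 : S ⊆ B x_z z) (h2 : S ⊆ B (α / d + x_p) α) :
    S ⊆ B x_p (α * (z + d * (x_p - x_z)) / (α + d * (x_p - x_z))) := by
  have hD : 0 < d * (x_p - x_z) := mul_pos hd (sub_pos.2 hxzp)
  have hden : 0 < α + d * (x_p - x_z) := by linarith
  have hθ₀ : 0 < d * (x_p - x_z) / (α + d * (x_p - x_z)) := div_pos hD hden
  have hθ₁ : d * (x_p - x_z) / (α + d * (x_p - x_z)) < 1 := (div_lt_one hden).2 (by linarith)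
  have hx₁ : 0 < α / d + x_p := by have := hxz.trans hxzp; positivity
  have h := subset_interp_of_subset_of_subset hinterp hxz hx₁ hθ₀ hθ₁ h1 h2
  rwa [convexComb_integrability_eq hd.ne' hden.ne', convexComb_smoothness_eq hden.ne'] at h

end EmbeddingLine

theorem stmt5 {X : Type*} (S : Set X) (B : ℝ → ℝ → Set X)
    (hinterp : ∀ x₀ s₀ x₁ s₁ θ : ℝ, 0 < x₀ → 0 < x₁ → 0 < θ → θ < 1 →
      B x₀ s₀ ∩ B x₁ s₁ ⊆ B ((1 - θ) * x₀ + θ * x₁) ((1 - θ) * s₀ + θ * s₁))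
    (d : ℕ) (hd : 1 ≤ d) (x_z x_p z α : ℝ)
    (hxz : 0 < x_z) (hxzp : x_z < x_p) (hα : 0 < α)
    (h1 : S ⊆ B x_z z) (h2 : S ⊆ B (α / d + x_p) α) :
    S ⊆ B x_p (α * (z + d * (x_p - x_z)) / (α + d * (x_p - x_z))) :=
  subset_interp_embeddingLine hinterp (by exact_mod_cast hd) hxz hxzp hα h1 h2
end
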